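/- arXiv:1811.00396 — 2 statements merged into one kernel-verified Lean document; each statement's English description precedes it below -/
import Mathlib

section
/- For d = 2 and 0 < ε < 1/2, there is a constant C independent of ε with ∫₀^{1/2} (1 + ω^{−1/2}) · (ln ω / ln(ωε)) dω + ∫_{1/2}^∞ (1 + ω^{−1/2}) · e^{−√ω/4}/|ln ε| dω ≤ C / |ln ε|. -/
open MeasureTheory

private lemma exp_bound_aux {ω : ℝ} (hω : 0 < ω) :
    Real.exp (-Real.sqrt ω / 4) ≤ 65536 * (ω ^ 2)⁻¹ := by
  set s := Real.sqrt ω with hs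
  have hs0 : 0 ≤ s := Real.sqrt_nonneg ω
  have h1 : s / 16 ≤ Real.exp (s / 16) := by
    have := Real.add_one_le_exp (s / 16); linarith
  have h2 : (s / 16) ^ 4 ≤ (Real.exp (s / 16)) ^ 4 :=
    pow_le_pow_left₀ (by positivity) h1 4
  have h3 : (Real.exp (s / 16)) ^ 4 = Real.exp (s / 4) := by
    rw [← Real.exp_nat_mul]; ring_nf
  have h4 : (s / 16) ^ 4 = ω ^ 2 / 65536 := by
    have : s ^ 2 = ω := Real.sq_sqrt hω.le
    field_simp; nlinarith [this]
  have key : ω ^ 2 ≤ 65536 * Real.exp (s / 4) := by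
    rw [h3, h4] at h2; linarith
  have hexp : Real.exp (-s / 4) * Real.exp (s / 4) = 1 := by
    rw [← Real.exp_add]; ring_nf; exact Real.exp_zero
  have hω2 : 0 < ω ^ 2 := by positivity
  have h5 : Real.exp (-s / 4) * ω ^ 2 ≤ 65536 := by
    calc Real.exp (-s / 4) * ω ^ 2
        ≤ Real.exp (-s / 4) * (65536 * Real.exp (s / 4)) :=
          mul_le_mul_of_nonneg_left key (Real.exp_pos _).le
      _ = 65536 := by
          rw [← mul_assoc, mul_comm (Real.exp (-s / 4)) 65536, mul_assoc, hexp, mul_one]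
  calc Real.exp (-s / 4) = Real.exp (-s / 4) * ω ^ 2 * (ω ^ 2)⁻¹ := by
        field_simp
    _ ≤ 65536 * (ω ^ 2)⁻¹ := mul_le_mul_of_nonneg_right h5 (by positivity)

/-- **Frequency-integration bound in 2D.** For `0 < ε < 1/2`,
`∫₀^{1/2} (1 + ω^{−1/2}) (ln ω / ln(ωε)) dω
  + ∫_{1/2}^∞ (1 + ω^{−1/2}) e^{−√ω/4}/|ln ε| dω ≤ C/|ln ε|`
with `C` independent of `ε`. -/
theorem frequency_integral_bound_2d :
    ∃ C : ℝ, 0 < C ∧ ∀ ε : ℝ, 0 < ε → ε < 1 / 2 →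
      (∫ ω in Set.Ioo (0 : ℝ) (1 / 2),
          (1 + ω ^ (-(1 : ℝ) / 2)) * (Real.log ω / Real.log (ω * ε))) +
        (∫ ω in Set.Ioi (1 / 2 : ℝ),
          (1 + ω ^ (-(1 : ℝ) / 2)) * (Real.exp (-Real.sqrt ω / 4) / |Real.log ε|))
        ≤ C / |Real.log ε| := by
  refine ⟨393248, by norm_num, fun ε hε hε2 => ?_⟩
  have hlε : Real.log ε < 0 := Real.log_neg hε (by linarith)
  have habs : |Real.log ε| = -Real.log ε := abs_of_neg hlε
  have hpos : (0 : ℝ) < |Real.log ε| := abs_pos.mpr hlε.ne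
  -- dominating functions
  set g₁ : ℝ → ℝ := fun ω => 8 * ω ^ (-3/4 : ℝ) * |Real.log ε|⁻¹ with hg₁
  set g₂ : ℝ → ℝ := fun ω => 196608 * ω ^ (-2 : ℝ) * |Real.log ε|⁻¹ with hg₂
  have hint₁ : IntegrableOn g₁ (Set.Ioo (0:ℝ) (1/2)) := by
    have h : IntervalIntegrable (fun ω : ℝ => ω ^ (-3/4 : ℝ)) volume 0 (1/2) :=
      intervalIntegral.intervalIntegrable_rpow' (by norm_num)
    have h2 : IntegrableOn (fun ω : ℝ => ω ^ (-3/4 : ℝ)) (Set.Ioo (0:ℝ) (1/2)) :=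
      ((intervalIntegrable_iff_integrableOn_Ioc_of_le (by norm_num)).mp h).mono_set
        Set.Ioo_subset_Ioc_self
    exact (h2.const_mul 8).mul_const _
  have hint₂ : IntegrableOn g₂ (Set.Ioi (1/2 : ℝ)) := by
    have h : IntegrableOn (fun ω : ℝ => ω ^ (-2 : ℝ)) (Set.Ioi (1/2 : ℝ)) :=
      integrableOn_Ioi_rpow_of_lt (by norm_num) (by norm_num)
    exact (h.const_mul 196608).mul_const _
  -- first integral bound
  have hb₁ : (∫ ω in Set.Ioo (0 : ℝ) (1 / 2),
      (1 + ω ^ (-(1 : ℝ) / 2)) * (Real.log ω / Real.log (ω * ε)))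
      ≤ ∫ ω in Set.Ioo (0 : ℝ) (1 / 2), g₁ ω := by
    apply integral_mono_of_nonneg
    · rw [Filter.EventuallyLE, ae_restrict_iff' measurableSet_Ioo]
      filter_upwards with ω hω
      obtain ⟨hω0, hω2⟩ := hω
      have hlogω : Real.log ω < 0 := Real.log_neg hω0 (by linarith)
      have hlogωε : Real.log (ω * ε) < 0 := by
        rw [Real.log_mul hω0.ne' hε.ne']; linarith
      have : (0:ℝ) ≤ Real.log ω / Real.log (ω * ε) :=
        div_nonneg_of_nonpos hlogω.le hlogωε.le
      positivity
    · exact hint₁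
    · rw [Filter.EventuallyLE, ae_restrict_iff' measurableSet_Ioo]
      filter_upwards with ω hω
      obtain ⟨hω0, hω2⟩ := hω
      have hω1 : ω < 1 := by linarith
      have hlogω : Real.log ω < 0 := Real.log_neg hω0 hω1
      have hlogmul : Real.log (ω * ε) = Real.log ω + Real.log ε :=
        Real.log_mul hω0.ne' hε.ne'
      -- step 1: log ω / log (ωε) ≤ (-log ω) / |log ε|
      have step1 : Real.log ω / Real.log (ω * ε) ≤ (-Real.log ω) / |Real.log ε| := by
        rw [habs, hlogmul]
        have h1 : Real.log ω / (Real.log ω + Real.log ε)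
            = (-Real.log ω) / (-(Real.log ω + Real.log ε)) := by
          rw [neg_div_neg_eq]
        rw [h1]
        apply div_le_div_of_nonneg_left (by linarith) (by linarith) (by linarith)
      -- step 2: -log ω ≤ 4 ω^{-1/4}
      have step2 : -Real.log ω ≤ 4 * ω ^ (-1/4 : ℝ) := by
        have h := Real.log_le_sub_one_of_pos (x := ω ^ (-1/4 : ℝ)) (by positivity)
        rw [Real.log_rpow hω0] at h
        have hrp : (0:ℝ) ≤ ω ^ (-1/4 : ℝ) := by positivity
        linarith
      -- step 3: 1 + ω^{-1/2} ≤ 2 ω^{-1/2}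
      have step3 : 1 + ω ^ (-(1:ℝ)/2) ≤ 2 * ω ^ (-(1:ℝ)/2) := by
        have : (1:ℝ) ≤ ω ^ (-(1:ℝ)/2) :=
          Real.one_le_rpow_of_pos_of_le_one_of_nonpos hω0 hω1.le (by norm_num)
        linarith
      have hfac : (0:ℝ) ≤ Real.log ω / Real.log (ω * ε) := by
        have hlogωε : Real.log (ω * ε) < 0 := by rw [hlogmul]; linarith
        exact div_nonneg_of_nonpos hlogω.le hlogωε.le
      have hchain : Real.log ω / Real.log (ω * ε)
          ≤ 4 * ω ^ (-1/4 : ℝ) * |Real.log ε|⁻¹ := by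
        refine step1.trans ?_
        rw [div_eq_mul_inv]
        exact mul_le_mul_of_nonneg_right step2 (by positivity)
      calc (1 + ω ^ (-(1:ℝ)/2)) * (Real.log ω / Real.log (ω * ε))
          ≤ (2 * ω ^ (-(1:ℝ)/2)) * (4 * ω ^ (-1/4 : ℝ) * |Real.log ε|⁻¹) := by
            apply mul_le_mul step3 hchain hfac (by positivity)
        _ = 8 * (ω ^ (-(1:ℝ)/2) * ω ^ (-1/4 : ℝ)) * |Real.log ε|⁻¹ := by ring
        _ = g₁ ω := by
            rw [← Real.rpow_add hω0, hg₁]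
            norm_num
  -- second integral bound
  have hb₂ : (∫ ω in Set.Ioi (1/2 : ℝ),
      (1 + ω ^ (-(1 : ℝ) / 2)) * (Real.exp (-Real.sqrt ω / 4) / |Real.log ε|))
      ≤ ∫ ω in Set.Ioi (1/2 : ℝ), g₂ ω := by
    apply integral_mono_of_nonneg
    · rw [Filter.EventuallyLE, ae_restrict_iff' measurableSet_Ioi]
      filter_upwards with ω hω
      have hω0 : (0:ℝ) < ω := lt_trans (by norm_num) hω
      positivity
    · exact hint₂
    · rw [Filter.EventuallyLE, ae_restrict_iff' measurableSet_Ioi]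
      filter_upwards with ω hω
      rw [Set.mem_Ioi] at hω
      have hω0 : (0:ℝ) < ω := lt_trans (by norm_num) hω
      have hfac1 : 1 + ω ^ (-(1:ℝ)/2) ≤ 3 := by
        have h1 : ω ^ (-(1:ℝ)/2) ≤ (1/2 : ℝ) ^ (-(1:ℝ)/2) :=
          Real.rpow_le_rpow_of_nonpos (by norm_num) hω.le (by norm_num)
        have h2 : (1/2 : ℝ) ^ (-(1:ℝ)/2) ≤ 2 := by
          have hr : (1/2 : ℝ) ≤ (1/2 : ℝ) ^ ((1:ℝ)/2) := by
            have := Real.rpow_le_rpow_of_exponent_ge (x := (1/2:ℝ))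
              (by norm_num) (by norm_num) (by norm_num : (1:ℝ)/2 ≤ 1)
            rwa [Real.rpow_one] at this
          have hrpos : (0:ℝ) < (1/2 : ℝ) ^ ((1:ℝ)/2) := by positivity
          rw [show (-(1:ℝ)/2) = -((1:ℝ)/2) by ring, Real.rpow_neg (by norm_num)]
          rw [inv_le_comm₀ hrpos (by norm_num)]
          linarith
        linarith
      have hfac2 : Real.exp (-Real.sqrt ω / 4) ≤ 65536 * ω ^ (-2 : ℝ) := by
        have h := exp_bound_aux hω0
        have : ω ^ (-2 : ℝ) = (ω ^ 2)⁻¹ := by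
          rw [← Real.rpow_natCast ω 2, ← Real.rpow_neg hω0.le]; norm_num
        rw [this]; exact h
      have hmm : (1 + ω ^ (-(1:ℝ)/2)) * Real.exp (-Real.sqrt ω / 4)
          ≤ 3 * (65536 * ω ^ (-2 : ℝ)) :=
        mul_le_mul hfac1 hfac2 (Real.exp_pos _).le (by norm_num)
      calc (1 + ω ^ (-(1:ℝ)/2)) * (Real.exp (-Real.sqrt ω / 4) / |Real.log ε|)
          = ((1 + ω ^ (-(1:ℝ)/2)) * Real.exp (-Real.sqrt ω / 4)) * |Real.log ε|⁻¹ := by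
            ring
        _ ≤ (3 * (65536 * ω ^ (-2 : ℝ))) * |Real.log ε|⁻¹ :=
            mul_le_mul_of_nonneg_right hmm (by positivity)
        _ = g₂ ω := by rw [hg₂]; ring
  -- compute the dominating integrals
  have hI₁ : (∫ ω in Set.Ioo (0 : ℝ) (1/2), g₁ ω)
      = 32 * (1/2 : ℝ) ^ ((1:ℝ)/4) * |Real.log ε|⁻¹ := by
    have hval : (∫ ω in Set.Ioo (0:ℝ) (1/2), ω ^ (-3/4 : ℝ))
        = 4 * (1/2 : ℝ) ^ ((1:ℝ)/4) := by
      rw [← MeasureTheory.integral_Ioc_eq_integral_Ioo,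
        ← intervalIntegral.integral_of_le (by norm_num : (0:ℝ) ≤ 1/2),
        integral_rpow (Or.inl (by norm_num : (-1:ℝ) < -3/4)),
        Real.zero_rpow (by norm_num), show (-3/4 + 1 : ℝ) = (1:ℝ)/4 by norm_num]
      ring
    rw [hg₁]
    rw [integral_mul_const, integral_const_mul, hval]
    ring
  have hI₂ : (∫ ω in Set.Ioi (1/2 : ℝ), g₂ ω) = 393216 * |Real.log ε|⁻¹ := by
    rw [hg₂]
    rw [integral_mul_const, integral_const_mul,
      integral_Ioi_rpow_of_lt (by norm_num : (-2:ℝ) < -1) (by norm_num : (0:ℝ) < 1/2),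
      show (-2 : ℝ) + 1 = -1 by norm_num, Real.rpow_neg_one]
    norm_num
  have hrp1 : (1/2 : ℝ) ^ ((1:ℝ)/4) ≤ 1 :=
    Real.rpow_le_one (by norm_num) (by norm_num) (by norm_num)
  have := add_le_add hb₁ hb₂
  rw [hI₁, hI₂] at this
  have h32 : 32 * (1/2 : ℝ) ^ ((1:ℝ)/4) ≤ 32 := by nlinarith
  have hinv : (0:ℝ) ≤ |Real.log ε|⁻¹ := (inv_pos.mpr hpos).le
  have h32' : 32 * (1/2 : ℝ) ^ ((1:ℝ)/4) * |Real.log ε|⁻¹ ≤ 32 * |Real.log ε|⁻¹ :=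
    mul_le_mul_of_nonneg_right h32 hinv
  have hfin : (32 : ℝ) * (1/2 : ℝ) ^ ((1:ℝ)/4) * |Real.log ε|⁻¹
      + 393216 * |Real.log ε|⁻¹ ≤ 393248 * |Real.log ε|⁻¹ := by linarith
  refine (this.trans hfin).trans ?_
  rw [div_eq_mul_inv 393248]
end

section
/- The blow-up map F_ε: ℝᵈ → ℝᵈ defined by F_ε(x) = x in ℝᵈ\B₂, F_ε(x) = ((2−2ε)/(2−ε) + |x|/(2−ε)) x/|x| in B₂\B_ε, F_ε(x) = x/ε in B_ε (with 0 < ε < 1/2) is a bijection of ℝᵈ, Lipschitz with Lipschitz inverse, maps B_ε onto B₁ and B₂\B_ε onto B₂\B₁, equals the identity outside B₂, and satisfies det∇F_ε ≥ c(ε) > 0 a.e. -/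
open MeasureTheory Metric

noncomputable section

/-- The Kohn–Shen–Vogelius–Weinstein blow-up map `F_ε`: identity outside `B₂`,
`x ↦ ((2−2ε)/(2−ε) + |x|/(2−ε)) x/|x|` on `B₂ \ B_ε`, `x ↦ x/ε` on `B_ε`. -/
def Fmap (d : ℕ) (ε : ℝ) (x : EuclideanSpace ℝ (Fin d)) : EuclideanSpace ℝ (Fin d) :=
  if 2 ≤ ‖x‖ then x
  else if ε ≤ ‖x‖ then (((2 - 2 * ε) / (2 - ε)) / ‖x‖ + 1 / (2 - ε)) • x
  else ε⁻¹ • x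

/-- Jacobian matrix `∇F` of a map `F : ℝᵈ → ℝᵈ`. -/
def jacMat {d : ℕ} (F : EuclideanSpace ℝ (Fin d) → EuclideanSpace ℝ (Fin d))
    (x : EuclideanSpace ℝ (Fin d)) : Matrix (Fin d) (Fin d) ℝ :=
  fun i j => fderiv ℝ F x (EuclideanSpace.single j 1) i

/-
`F_ε` is the radial map `x ↦ (φ(|x|)/|x|) x` for the increasing piecewise-linear bijection `φ`
of `[0, ∞)` that is `r/ε` on `[0, ε]`, `(r + 2 - 2ε)/(2 - ε)` on `[ε, 2]` and `r` beyond; its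
inverse is the radial map of the piecewise-linear inverse `ψ` of `φ`. A radial map with an
`L`-Lipschitz profile `g`, `g 0 = 0`, is `3L`-Lipschitz, because `|g r / r| ≤ L` and
`s |g r / r - g s / s| ≤ 2L (r - s)` for `0 ≤ s ≤ r`. The images of the balls are read off from
`ψ 1 = ε`, `ψ 2 = 2` and the monotonicity of `ψ`.
Off the null spheres `|x| = ε` and `|x| = 2` the map is locally `x/ε`, the identity, or
`(a/|x| + b) x`. The Jacobian matrix of the last is `(a/|x| + b) I - a|x|⁻³ x xᵀ`, whose
determinant is `(a/|x| + b)^(d-1) b` by the matrix determinant lemma; hence `det ∇F_ε ≥ 2^(-d)`.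
-/

open Set Function Filter Topology Matrix
open scoped NNReal

section Radial

variable {E : Type*} [NormedAddCommGroup E] [NormedSpace ℝ E]

def radial (g : ℝ → ℝ) (x : E) : E := (g ‖x‖ / ‖x‖) • x

theorem norm_radial {g : ℝ → ℝ} (hg : g 0 = 0) (x : E) : ‖radial g x‖ = |g ‖x‖| := by
  rcases eq_or_ne x 0 with rfl | hx
  · simp [radial, hg]
  · rw [radial, norm_smul, Real.norm_eq_abs, abs_div, abs_norm,
      div_mul_cancel₀ _ (norm_ne_zero_iff.2 hx)]

theorem leftInverse_radial {g h : ℝ → ℝ} (hg : ∀ r, 0 < r → 0 < g r)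
    (hgh : ∀ r, 0 < r → h (g r) = r) : LeftInverse (radial h : E → E) (radial g) := by
  intro x
  rcases eq_or_ne x 0 with rfl | hx
  · simp [radial]
  have hr : 0 < ‖x‖ := norm_pos_iff.2 hx
  have hgr := hg _ hr
  have hnorm : ‖radial g x‖ = g ‖x‖ := by
    rw [radial, norm_smul, Real.norm_of_nonneg (by positivity), div_mul_cancel₀ _ hr.ne']
  rw [radial, hnorm, hgh _ hr, radial, smul_smul, div_mul_div_cancel₀ hgr.ne', div_self hr.ne',
    one_smul]

variable {g : ℝ → ℝ} {L : ℝ≥0}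

theorem abs_div_self_le_of_lipschitzWith (hg : LipschitzWith L g) (h0 : g 0 = 0) (r : ℝ) :
    |g r / r| ≤ L := by
  have : |g r| ≤ L * |r| := by simpa [h0, Real.dist_eq] using hg.dist_le_mul r 0
  rw [abs_div]
  exact div_le_of_le_mul₀ (abs_nonneg _) L.coe_nonneg this

theorem abs_div_sub_div_mul_le_of_lipschitzWith (hg : LipschitzWith L g) (h0 : g 0 = 0) {r s : ℝ}
    (hs : 0 ≤ s) (hsr : s ≤ r) : |g r / r - g s / s| * s ≤ 2 * L * (r - s) := by
  rcases hs.eq_or_lt with rfl | hs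
  · simpa using mul_nonneg (mul_nonneg zero_le_two L.coe_nonneg) hsr
  have hr : 0 < r := hs.trans_le hsr
  have hsplit : (g r / r - g s / s) * s = (g r - g s) - g r / r * (r - s) := by
    field_simp
    ring
  have hdiff : |g r - g s| ≤ L * (r - s) := by
    simpa [Real.dist_eq, abs_of_nonneg (sub_nonneg.2 hsr)] using hg.dist_le_mul r s
  calc |g r / r - g s / s| * s = |(g r - g s) - g r / r * (r - s)| := by
        rw [← hsplit, abs_mul, abs_of_pos hs]
    _ ≤ |g r - g s| + |g r / r| * (r - s) :=
        (abs_sub _ _).trans_eq (by rw [abs_mul, abs_of_nonneg (sub_nonneg.2 hsr)])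
    _ ≤ L * (r - s) + L * (r - s) := by
        gcongr
        exact abs_div_self_le_of_lipschitzWith hg h0 r
    _ = 2 * L * (r - s) := by ring

theorem norm_radial_sub_radial_le (hg : LipschitzWith L g) (h0 : g 0 = 0) {x y : E}
    (hyx : ‖y‖ ≤ ‖x‖) : ‖radial g x - radial g y‖ ≤ 3 * L * ‖x - y‖ := by
  have hsplit : radial g x - radial g y
      = (g ‖x‖ / ‖x‖) • (x - y) + (g ‖x‖ / ‖x‖ - g ‖y‖ / ‖y‖) • y := by
    simp only [radial, smul_sub, sub_smul]
    abel
  have hnorm := mul_le_mul_of_nonneg_left (norm_sub_norm_le x y) L.coe_nonneg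
  calc ‖radial g x - radial g y‖
      ≤ |g ‖x‖ / ‖x‖| * ‖x - y‖ + |g ‖x‖ / ‖x‖ - g ‖y‖ / ‖y‖| * ‖y‖ := by
        rw [hsplit, ← Real.norm_eq_abs, ← Real.norm_eq_abs, ← norm_smul, ← norm_smul]
        exact norm_add_le _ _
    _ ≤ L * ‖x - y‖ + 2 * L * (‖x‖ - ‖y‖) :=
        add_le_add (by gcongr; exact abs_div_self_le_of_lipschitzWith hg h0 _)
          (abs_div_sub_div_mul_le_of_lipschitzWith hg h0 (norm_nonneg y) hyx)
    _ ≤ 3 * L * ‖x - y‖ := by linarith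

theorem lipschitzWith_radial (hg : LipschitzWith L g) (h0 : g 0 = 0) :
    LipschitzWith (3 * L) (radial g : E → E) := by
  refine LipschitzWith.of_dist_le_mul fun x y => ?_
  rw [dist_eq_norm, dist_eq_norm, NNReal.coe_mul, NNReal.coe_ofNat]
  rcases le_total ‖y‖ ‖x‖ with h | h
  · exact norm_radial_sub_radial_le hg h0 h
  · rw [norm_sub_rev, norm_sub_rev x]
    exact norm_radial_sub_radial_le hg h0 h

end Radial

section Jacobian

variable {F : Type*} [NormedAddCommGroup F] [InnerProductSpace ℝ F]

theorem hasFDerivAt_norm {x : F} (hx : x ≠ 0) :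
    HasFDerivAt (‖·‖) (‖x‖⁻¹ • innerSL ℝ x) x := by
  have hsqrt : HasDerivAt Real.sqrt (1 / (2 * ‖x‖)) (‖x‖ ^ 2) := by
    simpa [Real.sqrt_sq (norm_nonneg x)] using
      Real.hasDerivAt_sqrt (pow_ne_zero 2 (norm_ne_zero_iff.2 hx))
  have hcomp := hsqrt.comp_hasFDerivAt x (hasStrictFDerivAt_norm_sq x).hasFDerivAt
  rw [show (Real.sqrt ∘ fun y : F => ‖y‖ ^ 2) = (‖·‖) from
    funext fun y => Real.sqrt_sq (norm_nonneg y)] at hcomp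
  refine hcomp.congr_fderiv ?_
  ext v
  simp only [one_div, _root_.mul_inv_rev, _root_.smul_apply, coe_innerSL_apply, nsmul_eq_mul,
    Nat.cast_ofNat, smul_eq_mul]
  field_simp

theorem hasFDerivAt_div_norm_add_smul {x : F} (hx : x ≠ 0) (a b : ℝ) :
    HasFDerivAt (fun y : F => (a / ‖y‖ + b) • y)
      ((a / ‖x‖ + b) • ContinuousLinearMap.id ℝ F + (-(a / ‖x‖ ^ 3) • innerSL ℝ x).smulRight x)
      x := by
  have hr : ‖x‖ ≠ 0 := norm_ne_zero_iff.2 hx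
  have hdiv : HasFDerivAt (fun y : F => a / ‖y‖ + b) (-(a / ‖x‖ ^ 3) • innerSL ℝ x) x := by
    have := (((hasDerivAt_inv hr).comp_hasFDerivAt x (hasFDerivAt_norm hx)).const_mul a).add_const b
    simp only [div_eq_mul_inv]
    refine this.congr_fderiv ?_
    ext v
    simp only [neg_smul, smul_neg, _root_.neg_apply, _root_.smul_apply, coe_innerSL_apply,
      smul_eq_mul, neg_inj]
    field_simp
  exact hdiv.smul (hasFDerivAt_id x)

theorem Matrix.det_smul_one_add_smul_vecMulVec {n R : Type*} [Fintype n] [DecidableEq n] [Field R]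
    {α : R} (hα : α ≠ 0) (β : R) (v : n → R) :
    (α • (1 : Matrix n n R) + β • vecMulVec v v).det
      = α ^ Fintype.card n * (1 + β / α * (v ⬝ᵥ v)) := by
  have hfactor : α • (1 : Matrix n n R) + β • vecMulVec v v
      = α • (1 + replicateCol Unit ((β / α) • v) * replicateRow Unit v) := by
    rw [← vecMulVec_eq, smul_add, smul_vecMulVec, smul_smul, mul_div_cancel₀ _ hα]
  rw [hfactor, det_smul, det_one_add_replicateCol_mul_replicateRow, dotProduct_smul,
    dotProduct_comm, smul_eq_mul]

theorem EuclideanSpace.dim_pos_of_ne_zero {d : ℕ} {x : EuclideanSpace ℝ (Fin d)} (hx : x ≠ 0) :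
    0 < d := by
  rcases d with _ | d
  · exact absurd (Subsingleton.elim x 0) hx
  · exact d.succ_pos

variable {d : ℕ} {f : EuclideanSpace ℝ (Fin d) → EuclideanSpace ℝ (Fin d)}
  {x : EuclideanSpace ℝ (Fin d)}

theorem jacMat_eq_smul_one_of_eventuallyEq {c : ℝ} (h : f =ᶠ[𝓝 x] fun y => c • y) :
    jacMat f x = c • (1 : Matrix (Fin d) (Fin d) ℝ) := by
  have hf := ((hasFDerivAt_id (𝕜 := ℝ) x).const_smul c).congr_of_eventuallyEq h
  ext i j
  simp [jacMat, hf.fderiv, Matrix.one_apply]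

theorem det_jacMat_of_eventuallyEq_div_norm_add_smul {a b : ℝ} (hx : x ≠ 0)
    (hα : a / ‖x‖ + b ≠ 0) (h : f =ᶠ[𝓝 x] fun y => (a / ‖y‖ + b) • y) :
    (jacMat f x).det = (a / ‖x‖ + b) ^ (d - 1) * b := by
  have hf := (hasFDerivAt_div_norm_add_smul hx a b).congr_of_eventuallyEq h
  have hjac : jacMat f x = (a / ‖x‖ + b) • 1 + (-(a / ‖x‖ ^ 3)) • vecMulVec x x := by
    ext i j
    simp only [jacMat, hf.fderiv, neg_smul, _root_.add_apply, _root_.smul_apply,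
      ContinuousLinearMap.id_apply, ContinuousLinearMap.smulRight_apply, _root_.neg_apply,
      coe_innerSL_apply,
      EuclideanSpace.inner_single_right, Real.ringHom_apply, one_mul, smul_eq_mul, PiLp.add_apply,
      PiLp.smul_apply, PiLp.single_apply, mul_ite, mul_one, mul_zero, PiLp.neg_apply,
      Matrix.add_apply, Matrix.smul_apply, Matrix.one_apply, Matrix.neg_apply, vecMulVec_apply]
    ring
  have hnorm : x ⬝ᵥ x = ‖x‖ ^ 2 := by
    rw [EuclideanSpace.real_norm_sq_eq]
    simp only [dotProduct, sq]
  have hr : ‖x‖ ≠ 0 := norm_ne_zero_iff.2 hx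
  have hpow : (a / ‖x‖ + b) ^ d = (a / ‖x‖ + b) ^ (d - 1) * (a / ‖x‖ + b) := by
    rw [← pow_succ, Nat.sub_add_cancel (EuclideanSpace.dim_pos_of_ne_zero hx)]
  have hrank_one : (a / ‖x‖ + b) * (1 + -(a / ‖x‖ ^ 3) / (a / ‖x‖ + b) * ‖x‖ ^ 2) = b := by
    rw [mul_add, mul_one, ← mul_assoc, mul_div_cancel₀ _ hα]
    field_simp
    ring
  rw [hjac, Matrix.det_smul_one_add_smul_vecMulVec hα, Fintype.card_fin, hnorm, hpow, mul_assoc,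
    hrank_one]

end Jacobian

namespace Fmap

/-- `profile ε` is `r / ε` on `[0, ε]`, `(r + 2 - 2ε) / (2 - ε)` on `[ε, 2]` and the identity
beyond; `profileInv ε` is its inverse. Writing them with `max`/`min` of affine maps makes them
visibly Lipschitz. -/
def profile (ε r : ℝ) : ℝ := max r (min (ε⁻¹ * r) ((2 - ε)⁻¹ * (r + (2 - 2 * ε))))

def profileInv (ε s : ℝ) : ℝ := min s (max (ε * s) ((2 - ε) * s - (2 - 2 * ε)))

variable {ε r s : ℝ}

theorem profile_of_le (hε : 0 < ε) (hε₁ : ε ≤ 1) (hr : 0 ≤ r) (hrε : r ≤ ε) :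
    profile ε r = ε⁻¹ * r := by
  have hε₂ : 0 < 2 - ε := by linarith
  have hmin : ε⁻¹ * r ≤ (2 - ε)⁻¹ * (r + (2 - 2 * ε)) := by
    rw [inv_mul_eq_div, inv_mul_eq_div, div_le_div_iff₀ hε hε₂]
    nlinarith
  have hmax : r ≤ ε⁻¹ * r := by
    rw [inv_mul_eq_div, le_div_iff₀ hε]
    nlinarith
  rw [profile, min_eq_left hmin, max_eq_right hmax]

theorem profile_of_mem_Icc (hε : 0 < ε) (hε₁ : ε ≤ 1) (hεr : ε ≤ r) (hr2 : r ≤ 2) :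
    profile ε r = (2 - ε)⁻¹ * (r + (2 - 2 * ε)) := by
  have hε₂ : 0 < 2 - ε := by linarith
  have hmin : (2 - ε)⁻¹ * (r + (2 - 2 * ε)) ≤ ε⁻¹ * r := by
    rw [inv_mul_eq_div, inv_mul_eq_div, div_le_div_iff₀ hε₂ hε]
    nlinarith
  have hmax : r ≤ (2 - ε)⁻¹ * (r + (2 - 2 * ε)) := by
    rw [inv_mul_eq_div, le_div_iff₀ hε₂]
    nlinarith
  rw [profile, min_eq_right hmin, max_eq_right hmax]

theorem profile_of_two_le (hε₁ : ε ≤ 1) (hr : 2 ≤ r) : profile ε r = r := by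
  have hε₂ : 0 < 2 - ε := by linarith
  have hmid : (2 - ε)⁻¹ * (r + (2 - 2 * ε)) ≤ r := by
    rw [inv_mul_eq_div, div_le_iff₀ hε₂]
    nlinarith
  exact max_eq_left (min_le_of_right_le hmid)

theorem profileInv_of_le (hε₁ : ε ≤ 1) (hs : 0 ≤ s) (hs1 : s ≤ 1) : profileInv ε s = ε * s := by
  have hmax : (2 - ε) * s - (2 - 2 * ε) ≤ ε * s := by nlinarith
  have hmin : ε * s ≤ s := by nlinarith
  rw [profileInv, max_eq_left hmax, min_eq_right hmin]

theorem profileInv_of_mem_Icc (hε₁ : ε ≤ 1) (hs1 : 1 ≤ s) (hs2 : s ≤ 2) :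
    profileInv ε s = (2 - ε) * s - (2 - 2 * ε) := by
  have hmax : ε * s ≤ (2 - ε) * s - (2 - 2 * ε) := by nlinarith
  have hmin : (2 - ε) * s - (2 - 2 * ε) ≤ s := by nlinarith
  rw [profileInv, max_eq_right hmax, min_eq_right hmin]

theorem profileInv_of_two_le (hε₁ : ε ≤ 1) (hs : 2 ≤ s) : profileInv ε s = s :=
  min_eq_left (le_max_of_le_right (by nlinarith))

theorem profile_pos (hr : 0 < r) : 0 < profile ε r := lt_max_of_lt_left hr

theorem profileInv_pos (hε : 0 < ε) (hs : 0 < s) : 0 < profileInv ε s :=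
  lt_min hs (lt_max_of_lt_left (mul_pos hε hs))

theorem strictMono_profileInv (hε : 0 < ε) (hε₁ : ε ≤ 1) : StrictMono (profileInv ε) :=
  fun s t hst => min_lt_min hst (max_lt_max (by gcongr) (by gcongr; linarith))

theorem profileInv_profile (hε : 0 < ε) (hε₁ : ε ≤ 1) (hr : 0 ≤ r) :
    profileInv ε (profile ε r) = r := by
  have hε₂ : 0 < 2 - ε := by linarith
  rcases le_total r ε with hrε | hεr
  · rw [profile_of_le hε hε₁ hr hrε, profileInv_of_le hε₁ (by positivity)
      (by rw [inv_mul_eq_div, div_le_one hε]; exact hrε)]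
    field_simp
  rcases le_total r 2 with hr2 | hr2
  · rw [profile_of_mem_Icc hε hε₁ hεr hr2]
    rw [profileInv_of_mem_Icc hε₁ (by rw [inv_mul_eq_div, le_div_iff₀ hε₂]; linarith)
      (by rw [inv_mul_eq_div, div_le_iff₀ hε₂]; nlinarith)]
    field_simp
    ring
  · rw [profile_of_two_le hε₁ hr2, profileInv_of_two_le hε₁ hr2]

theorem profile_profileInv (hε : 0 < ε) (hε₁ : ε ≤ 1) (hs : 0 ≤ s) :
    profile ε (profileInv ε s) = s := by
  have hε₂ : 2 - ε ≠ 0 := by linarith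
  rcases le_total s 1 with hs1 | hs1
  · rw [profileInv_of_le hε₁ hs hs1, profile_of_le hε hε₁ (by positivity) (by nlinarith)]
    field_simp
  rcases le_total s 2 with hs2 | hs2
  · rw [profileInv_of_mem_Icc hε₁ hs1 hs2, profile_of_mem_Icc hε hε₁ (by nlinarith) (by nlinarith)]
    field_simp
    ring
  · rw [profileInv_of_two_le hε₁ hs2, profile_of_two_le hε₁ hs2]

theorem profile_zero (hε : 0 < ε) (hε₁ : ε ≤ 1) : profile ε 0 = 0 := by
  rw [profile_of_le hε hε₁ le_rfl hε.le, mul_zero]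

theorem profileInv_zero (hε₁ : ε ≤ 1) : profileInv ε 0 = 0 := by
  rw [profileInv_of_le hε₁ le_rfl zero_le_one, mul_zero]

theorem profileInv_one (hε₁ : ε ≤ 1) : profileInv ε 1 = ε := by
  rw [profileInv_of_le hε₁ zero_le_one le_rfl, mul_one]

theorem profileInv_two (hε₁ : ε ≤ 1) : profileInv ε 2 = 2 := profileInv_of_two_le hε₁ le_rfl

theorem profileInv_lt_iff_lt_one (hε : 0 < ε) (hε₁ : ε ≤ 1) : profileInv ε s < ε ↔ s < 1 := by
  simpa only [profileInv_one hε₁] using (strictMono_profileInv hε hε₁).lt_iff_lt (b := 1)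

theorem profileInv_lt_two_iff (hε : 0 < ε) (hε₁ : ε ≤ 1) : profileInv ε s < 2 ↔ s < 2 := by
  simpa only [profileInv_two hε₁] using (strictMono_profileInv hε hε₁).lt_iff_lt (b := 2)

theorem lipschitzWith_profile : ∃ K, LipschitzWith K (profile ε) :=
  ⟨_, LipschitzWith.id.max ((lipschitzWith_smul ε⁻¹).min
    ((lipschitzWith_smul (2 - ε)⁻¹).comp (LipschitzWith.id.add (LipschitzWith.const _))))⟩

theorem lipschitzWith_profileInv : ∃ K, LipschitzWith K (profileInv ε) :=
  ⟨_, LipschitzWith.id.min ((lipschitzWith_smul ε).max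
    ((lipschitzWith_smul (2 - ε)).sub (LipschitzWith.const _)))⟩

variable {d : ℕ}

theorem eq_radial_profile (hε : 0 < ε) (hε₁ : ε ≤ 1) : Fmap d ε = radial (profile ε) := by
  funext x
  have hε₂ : 2 - ε ≠ 0 := by linarith
  rcases le_or_gt 2 ‖x‖ with h2 | h2
  · have hx : ‖x‖ ≠ 0 := by linarith
    rw [Fmap, if_pos h2, radial, profile_of_two_le hε₁ h2, div_self hx, one_smul]
  rcases le_or_gt ε ‖x‖ with hεx | hεx
  · have hx : ‖x‖ ≠ 0 := by linarith
    rw [Fmap, if_neg h2.not_ge, if_pos hεx, radial, profile_of_mem_Icc hε hε₁ hεx h2.le]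
    congr 1
    field_simp
    ring
  rw [Fmap, if_neg h2.not_ge, if_neg hεx.not_ge, radial,
    profile_of_le hε hε₁ (norm_nonneg x) hεx.le]
  rcases eq_or_ne x 0 with rfl | hx
  · simp
  rw [mul_div_assoc, div_self (norm_ne_zero_iff.2 hx), mul_one]

theorem leftInverse (hε : 0 < ε) (hε₁ : ε ≤ 1) :
    LeftInverse (radial (profileInv ε)) (Fmap d ε) := by
  rw [eq_radial_profile hε hε₁]
  exact leftInverse_radial (fun _ => profile_pos) fun _ hr => profileInv_profile hε hε₁ hr.le

theorem rightInverse (hε : 0 < ε) (hε₁ : ε ≤ 1) :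
    RightInverse (radial (profileInv ε)) (Fmap d ε) := by
  rw [eq_radial_profile hε hε₁]
  exact leftInverse_radial (fun _ => profileInv_pos hε) fun _ hs => profile_profileInv hε hε₁ hs.le

theorem lipschitzWith (hε : 0 < ε) (hε₁ : ε ≤ 1) : ∃ K, LipschitzWith K (Fmap d ε) := by
  obtain ⟨K, hK⟩ := lipschitzWith_profile (ε := ε)
  exact ⟨3 * K, eq_radial_profile hε hε₁ ▸ lipschitzWith_radial hK (profile_zero hε hε₁)⟩

theorem bijective (hε : 0 < ε) (hε₁ : ε ≤ 1) : Bijective (Fmap d ε) :=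
  ⟨(leftInverse hε hε₁).injective, (rightInverse hε hε₁).surjective⟩

theorem lipschitzWith_invFun (hε : 0 < ε) (hε₁ : ε ≤ 1) :
    ∃ K, LipschitzWith K (invFun (Fmap d ε)) := by
  obtain ⟨K, hK⟩ := lipschitzWith_profileInv (ε := ε)
  rw [invFun_eq_of_injective_of_rightInverse (bijective hε hε₁).injective (rightInverse hε hε₁)]
  exact ⟨3 * K, lipschitzWith_radial hK (profileInv_zero hε₁)⟩

theorem image_eq_preimage (hε : 0 < ε) (hε₁ : ε ≤ 1) :
    image (Fmap d ε) = preimage (radial (profileInv ε)) :=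
  image_eq_preimage_of_inverse (leftInverse hε hε₁) (rightInverse hε hε₁)

theorem norm_radial_profileInv (hε : 0 < ε) (hε₁ : ε ≤ 1) (y : EuclideanSpace ℝ (Fin d)) :
    ‖radial (profileInv ε) y‖ = profileInv ε ‖y‖ := by
  have hnonneg := (strictMono_profileInv hε hε₁).monotone (norm_nonneg y)
  rw [profileInv_zero hε₁] at hnonneg
  rw [norm_radial (profileInv_zero hε₁), abs_of_nonneg hnonneg]

theorem image_ball (hε : 0 < ε) (hε₁ : ε ≤ 1) :
    Fmap d ε '' ball 0 ε = ball 0 1 := by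
  ext y
  simp only [image_eq_preimage hε hε₁, mem_preimage, mem_ball_zero_iff,
    norm_radial_profileInv hε hε₁, profileInv_lt_iff_lt_one hε hε₁]

theorem image_ball_diff_ball (hε : 0 < ε) (hε₁ : ε ≤ 1) :
    Fmap d ε '' (ball 0 2 \ ball 0 ε) = ball 0 2 \ ball 0 1 := by
  ext y
  simp only [image_eq_preimage hε hε₁, mem_preimage, Set.mem_sdiff, mem_ball_zero_iff,
    norm_radial_profileInv hε hε₁, profileInv_lt_iff_lt_one hε hε₁, profileInv_lt_two_iff hε hε₁]

theorem one_half_pow_le_det_jacMat (hε : 0 < ε) (hε₁ : ε ≤ 1) {x : EuclideanSpace ℝ (Fin d)}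
    (hxε : ‖x‖ ≠ ε) (hx2 : ‖x‖ ≠ 2) : (1 / 2 : ℝ) ^ d ≤ (jacMat (Fmap d ε) x).det := by
  rcases hxε.lt_or_gt with hxε | hxε
  · have hloc : Fmap d ε =ᶠ[𝓝 x] fun y => ε⁻¹ • y := by
      filter_upwards [isOpen_lt continuous_norm continuous_const |>.mem_nhds hxε] with y hy
      rw [Fmap, if_neg (by linarith), if_neg (not_le.2 hy)]
    rw [jacMat_eq_smul_one_of_eventuallyEq hloc, det_smul, det_one, mul_one, Fintype.card_fin]
    exact pow_le_pow_left₀ (by norm_num) (by rw [one_div]; exact inv_anti₀ hε (by linarith)) d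
  rcases hx2.lt_or_gt with hx2 | hx2
  · have hx0 : x ≠ 0 := norm_pos_iff.1 (hε.trans hxε)
    have hloc : Fmap d ε =ᶠ[𝓝 x] fun y => ((2 - 2 * ε) / (2 - ε) / ‖y‖ + 1 / (2 - ε)) • y := by
      filter_upwards [isOpen_lt continuous_const continuous_norm |>.mem_nhds hxε,
        isOpen_lt continuous_norm continuous_const |>.mem_nhds hx2] with y hεy hy2
      rw [Fmap, if_neg (not_le.2 hy2), if_pos hεy.le]
    have hb : 1 / 2 ≤ 1 / (2 - ε) := one_div_le_one_div_of_le (by linarith) (by linarith)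
    have hα : 1 / (2 - ε) ≤ (2 - 2 * ε) / (2 - ε) / ‖x‖ + 1 / (2 - ε) :=
      le_add_of_nonneg_left (div_nonneg (div_nonneg (by linarith) (by linarith)) (norm_nonneg x))
    rw [det_jacMat_of_eventuallyEq_div_norm_add_smul hx0 (by linarith) hloc]
    calc (1 / 2 : ℝ) ^ d = (1 / 2) ^ (d - 1) * (1 / 2) := by
          rw [← pow_succ, Nat.sub_add_cancel (EuclideanSpace.dim_pos_of_ne_zero hx0)]
      _ ≤ _ := mul_le_mul (pow_le_pow_left₀ (by norm_num) (hb.trans hα) _) hb (by norm_num)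
          (pow_nonneg (by linarith) _)
  · have hloc : Fmap d ε =ᶠ[𝓝 x] fun y => (1 : ℝ) • y := by
      filter_upwards [isOpen_lt continuous_const continuous_norm |>.mem_nhds hx2] with y hy
      rw [Fmap, if_pos (le_of_lt hy), one_smul]
    rw [jacMat_eq_smul_one_of_eventuallyEq hloc, one_smul, det_one]
    exact pow_le_one₀ (by norm_num) (by norm_num)

theorem ae_one_half_pow_le_det_jacMat (hε : 0 < ε) (hε₁ : ε ≤ 1) :
    ∀ᵐ x : EuclideanSpace ℝ (Fin d) ∂volume, (1 / 2 : ℝ) ^ d ≤ (jacMat (Fmap d ε) x).det := by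
  have hnull : volume (sphere (0 : EuclideanSpace ℝ (Fin d)) ε ∪ sphere 0 2) = 0 :=
    measure_union_null (Measure.addHaar_sphere_of_ne_zero _ _ hε.ne')
      (Measure.addHaar_sphere_of_ne_zero _ _ two_ne_zero)
  filter_upwards [compl_mem_ae_iff.2 hnull] with x hx
  simp only [mem_compl_iff, mem_union, mem_sphere_zero_iff_norm, not_or] at hx
  exact one_half_pow_le_det_jacMat hε hε₁ hx.1 hx.2

end Fmap

theorem Fmap_properties_general (d : ℕ) (ε : ℝ) (hε : 0 < ε) (hε' : ε < 1 / 2) :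
    Function.Bijective (Fmap d ε) ∧
    (∃ K : NNReal, LipschitzWith K (Fmap d ε)) ∧
    (∃ K : NNReal, LipschitzWith K (Function.invFun (Fmap d ε))) ∧
    Fmap d ε '' ball 0 ε = ball 0 1 ∧
    Fmap d ε '' (ball 0 2 \ ball 0 ε) = ball 0 2 \ ball 0 1 ∧
    (∀ x : EuclideanSpace ℝ (Fin d), x ∉ ball 0 2 → Fmap d ε x = x) ∧
    (∃ c : ℝ, 0 < c ∧ ∀ᵐ x : EuclideanSpace ℝ (Fin d) ∂volume,
      c ≤ (jacMat (Fmap d ε) x).det) := by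
  have hε₁ : ε ≤ 1 := by linarith
  refine ⟨Fmap.bijective hε hε₁, Fmap.lipschitzWith hε hε₁, Fmap.lipschitzWith_invFun hε hε₁,
    Fmap.image_ball hε hε₁, Fmap.image_ball_diff_ball hε hε₁, fun x hx => ?_,
    ⟨_, by positivity, Fmap.ae_one_half_pow_le_det_jacMat hε hε₁⟩⟩
  rw [mem_ball_zero_iff, not_lt] at hx
  rw [Fmap, if_pos hx]

/-- **Properties of the blow-up map `F_ε`.** For `0 < ε < 1/2` and `d ≥ 2`,
`F_ε` is a bijection of `ℝᵈ`, Lipschitz with Lipschitz inverse, maps `B_ε`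
onto `B₁` and `B₂ \ B_ε` onto `B₂ \ B₁`, equals the identity outside `B₂`,
and `det ∇F_ε ≥ c(ε) > 0` a.e. -/
theorem Fmap_properties (d : ℕ) (hd : 2 ≤ d) (ε : ℝ) (hε : 0 < ε) (hε' : ε < 1 / 2) :
    Function.Bijective (Fmap d ε) ∧
    (∃ K : NNReal, LipschitzWith K (Fmap d ε)) ∧
    (∃ K : NNReal, LipschitzWith K (Function.invFun (Fmap d ε))) ∧
    Fmap d ε '' ball 0 ε = ball 0 1 ∧
    Fmap d ε '' (ball 0 2 \ ball 0 ε) = ball 0 2 \ ball 0 1 ∧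
    (∀ x : EuclideanSpace ℝ (Fin d), x ∉ ball 0 2 → Fmap d ε x = x) ∧
    (∃ c : ℝ, 0 < c ∧ ∀ᵐ x : EuclideanSpace ℝ (Fin d) ∂volume,
      c ≤ (jacMat (Fmap d ε) x).det) :=
  Fmap_properties_general d ε hε hε'

end
end
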